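/- arXiv:1710.07876 — 3 statements merged into one kernel-verified Lean document; each statement's English description precedes it below -/
import Mathlib

section
/- Geodesic property: let μ0 = (p0, ν0) and μ1 = (p1, ν1) be discrete measures on a metric space (X, dist), and let π* be an optimal coupling, i.e. d(μ0,μ1)² = Σ_{i,j} π*(i,j)·dist(ν0 i, ν1 j)². Suppose for each pair (i,j) there is a curve γ_{ij} : [0,1] → X with γ_{ij}(0) = ν0 i, γ_{ij}(1) = ν1 j, and dist(γ_{ij}(s), γ_{ij}(t)) = (t−s)·dist(ν0 i, ν1 j) whenever 0 ≤ s ≤ t ≤ 1. For t ∈ [0,1], let μ_t be the discrete measure indexed by pairs (i,j) ∈ Fin N0 × Fin N1 with weights π*(i,j) and support points γ_{ij}(t). Then for all 0 ≤ s ≤ t ≤ 1, d(μ_s, μ_t) = (t−s)·d(μ0, μ1). -/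
open Finset

/-- A probability vector indexed by a finite type. -/
def IsProbVec {I : Type*} [Fintype I] (p : I → ℝ) : Prop :=
  (∀ i, 0 ≤ p i) ∧ ∑ i, p i = 1

/-- A coupling of two probability vectors indexed by finite types. -/
def IsCoupling {I J : Type*} [Fintype I] [Fintype J] (p0 : I → ℝ) (p1 : J → ℝ)
    (π : I → J → ℝ) : Prop :=
  (∀ i j, 0 ≤ π i j) ∧ (∀ i, ∑ j, π i j = p0 i) ∧ (∀ j, ∑ i, π i j = p1 j)

/-- The transport distance between two discrete measures `(p0, ν0)` and `(p1, ν1)`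
on a metric space, with cost `dist²`. -/
noncomputable def discDist {X : Type*} [MetricSpace X] {I J : Type*} [Fintype I] [Fintype J]
    (p0 : I → ℝ) (ν0 : I → X) (p1 : J → ℝ) (ν1 : J → X) : ℝ :=
  Real.sqrt (sInf {c : ℝ | ∃ π : I → J → ℝ, IsCoupling p0 p1 π ∧
    c = ∑ i, ∑ j, π i j * dist (ν0 i) (ν1 j) ^ 2})

/-- Weighted `ℓ²` triangle inequality (Minkowski). -/
lemma weighted_l2_triangle {K : Type*} [Fintype K] (w a b : K → ℝ) (hw : ∀ k, 0 ≤ w k) :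
    Real.sqrt (∑ k, w k * (a k + b k) ^ 2) ≤
      Real.sqrt (∑ k, w k * (a k) ^ 2) + Real.sqrt (∑ k, w k * (b k) ^ 2) := by
  have key : ∀ f : K → ℝ, Real.sqrt (∑ k, w k * (f k) ^ 2) =
      ‖(EuclideanSpace.equiv K ℝ).symm (fun k => Real.sqrt (w k) * f k)‖ := by
    intro f
    rw [EuclideanSpace.norm_eq]
    congr 1
    refine Finset.sum_congr rfl fun k _ => ?_
    rw [Real.norm_eq_abs, sq_abs]
    show w k * f k ^ 2 = (Real.sqrt (w k) * f k) ^ 2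
    rw [mul_pow, Real.sq_sqrt (hw k)]
  have h1 : (fun k => Real.sqrt (w k) * (a k + b k)) =
      (fun k => Real.sqrt (w k) * a k) + (fun k => Real.sqrt (w k) * b k) := by
    funext k; show _ = Real.sqrt (w k) * a k + Real.sqrt (w k) * b k; ring
  rw [key, key, key, h1, map_add]
  exact norm_add_le _ _

/-- Any coupling gives an upper bound for `discDist`. -/
lemma discDist_le_sqrt {X : Type*} [MetricSpace X] {I J : Type*} [Fintype I] [Fintype J]
    (p0 : I → ℝ) (ν0 : I → X) (p1 : J → ℝ) (ν1 : J → X)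
    (π : I → J → ℝ) (h : IsCoupling p0 p1 π) :
    discDist p0 ν0 p1 ν1 ≤ Real.sqrt (∑ i, ∑ j, π i j * dist (ν0 i) (ν1 j) ^ 2) := by
  unfold discDist
  apply Real.sqrt_le_sqrt
  apply csInf_le
  · refine ⟨0, ?_⟩
    rintro c ⟨π', hπ', rfl⟩
    exact Finset.sum_nonneg fun i _ => Finset.sum_nonneg fun j _ =>
      mul_nonneg (hπ'.1 i j) (sq_nonneg _)
  · exact ⟨π, h, rfl⟩

/-- Geodesic property: interpolating along constant-speed curves with weights given by an
optimal coupling produces a constant-speed geodesic for the discrete transport distance. -/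
theorem discDist_geodesic {X : Type*} [MetricSpace X] {I J : Type*} [Fintype I] [Fintype J]
    (p0 : I → ℝ) (ν0 : I → X) (p1 : J → ℝ) (ν1 : J → X)
    (h0 : IsProbVec p0) (h1 : IsProbVec p1)
    (πstar : I → J → ℝ) (hπ : IsCoupling p0 p1 πstar)
    (hopt : discDist p0 ν0 p1 ν1 ^ 2 = ∑ i, ∑ j, πstar i j * dist (ν0 i) (ν1 j) ^ 2)
    (γ : I → J → ℝ → X)
    (hγ0 : ∀ i j, γ i j 0 = ν0 i) (hγ1 : ∀ i j, γ i j 1 = ν1 j)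
    (hspeed : ∀ i j, ∀ s t : ℝ, 0 ≤ s → s ≤ t → t ≤ 1 →
      dist (γ i j s) (γ i j t) = (t - s) * dist (ν0 i) (ν1 j)) :
    ∀ s t : ℝ, 0 ≤ s → s ≤ t → t ≤ 1 →
      discDist (fun q : I × J => πstar q.1 q.2) (fun q : I × J => γ q.1 q.2 s)
        (fun q : I × J => πstar q.1 q.2) (fun q : I × J => γ q.1 q.2 t) =
      (t - s) * discDist p0 ν0 p1 ν1 := by
  intro s t hs hst ht1
  classical
  have hD0 : 0 ≤ discDist p0 ν0 p1 ν1 := Real.sqrt_nonneg _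
  set D : ℝ := discDist p0 ν0 p1 ν1 with hDdef
  have hts : 0 ≤ t - s := sub_nonneg.2 hst
  have ht0 : 0 ≤ t := le_trans hs hst
  have hs1 : s ≤ 1 := le_trans hst ht1
  have h1t : 0 ≤ 1 - t := sub_nonneg.2 ht1
  -- lower bound: every admissible cost is at least ((t-s)*D)^2
  have lower : ∀ c ∈ {c : ℝ | ∃ π : (I × J) → (I × J) → ℝ,
      IsCoupling (fun q : I × J => πstar q.1 q.2) (fun q : I × J => πstar q.1 q.2) π ∧
      c = ∑ q, ∑ q', π q q' * dist (γ q.1 q.2 s) (γ q'.1 q'.2 t) ^ 2},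
      ((t - s) * D) ^ 2 ≤ c := by
    rintro c ⟨σ, hσ, rfl⟩
    set c : ℝ := ∑ q, ∑ q', σ q q' * dist (γ q.1 q.2 s) (γ q'.1 q'.2 t) ^ 2 with hcdef
    have hc0 : 0 ≤ c := Finset.sum_nonneg fun q _ => Finset.sum_nonneg fun q' _ =>
      mul_nonneg (hσ.1 q q') (sq_nonneg _)
    -- the induced coupling of p0 and p1
    set τ : I → J → ℝ := fun i j' => ∑ j, ∑ i', σ (i, j) (i', j') with hτdef
    have hτ : IsCoupling p0 p1 τ := by
      refine ⟨fun i j' => Finset.sum_nonneg fun j _ => Finset.sum_nonneg fun i' _ =>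
        hσ.1 _ _, fun i => ?_, fun j' => ?_⟩
      · have : ∀ j : J, ∑ j' : J, ∑ i' : I, σ (i, j) (i', j') = πstar i j := by
          intro j
          have := hσ.2.1 (i, j)
          rw [Fintype.sum_prod_type] at this
          rw [Finset.sum_comm]
          exact this
        calc ∑ j', τ i j' = ∑ j, ∑ j', ∑ i', σ (i, j) (i', j') := Finset.sum_comm
          _ = ∑ j, πstar i j := Finset.sum_congr rfl fun j _ => this j
          _ = p0 i := hπ.2.1 i
      · have : ∀ i' : I, ∑ i : I, ∑ j : J, σ (i, j) (i', j') = πstar i' j' := by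
          intro i'
          have := hσ.2.2 (i', j')
          rw [Fintype.sum_prod_type] at this
          exact this
        calc ∑ i, τ i j' = ∑ i, ∑ j, ∑ i', σ (i, j) (i', j') := rfl
          _ = ∑ i, ∑ i', ∑ j, σ (i, j) (i', j') :=
              Finset.sum_congr rfl fun i _ => Finset.sum_comm
          _ = ∑ i', ∑ i, ∑ j, σ (i, j) (i', j') := Finset.sum_comm
          _ = ∑ i', πstar i' j' := Finset.sum_congr rfl fun i' _ => this i'
          _ = p1 j' := hπ.2.2 j'
    -- the cost of τ as a sum over pairs of pairs
    set w : ((I × J) × (I × J)) → ℝ := fun k => σ k.1 k.2 with hwdef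
    have hw : ∀ k, 0 ≤ w k := fun k => hσ.1 k.1 k.2
    have hT : ∑ i, ∑ j', τ i j' * dist (ν0 i) (ν1 j') ^ 2 =
        ∑ k, w k * dist (ν0 k.1.1) (ν1 k.2.2) ^ 2 := by
      calc ∑ i, ∑ j', τ i j' * dist (ν0 i) (ν1 j') ^ 2
          = ∑ i, ∑ j', ∑ j, ∑ i', σ (i, j) (i', j') * dist (ν0 i) (ν1 j') ^ 2 := by
            refine Finset.sum_congr rfl fun i _ => Finset.sum_congr rfl fun j' _ => ?_
            rw [Finset.sum_mul]
            exact Finset.sum_congr rfl fun j _ => Finset.sum_mul ..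
        _ = ∑ i, ∑ j, ∑ j', ∑ i', σ (i, j) (i', j') * dist (ν0 i) (ν1 j') ^ 2 :=
            Finset.sum_congr rfl fun i _ => Finset.sum_comm
        _ = ∑ i, ∑ j, ∑ i', ∑ j', σ (i, j) (i', j') * dist (ν0 i) (ν1 j') ^ 2 :=
            Finset.sum_congr rfl fun i _ => Finset.sum_congr rfl fun j _ => Finset.sum_comm
        _ = ∑ k, w k * dist (ν0 k.1.1) (ν1 k.2.2) ^ 2 := by
            simp only [Fintype.sum_prod_type]
            rfl
    -- marginal computations
    have hrow : ∀ f : I × J → ℝ, ∑ k, w k * f k.1 = ∑ i, ∑ j, πstar i j * f (i, j) := by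
      intro f
      calc ∑ k, w k * f k.1 = ∑ q : I × J, ∑ q' : I × J, σ q q' * f q := by
            rw [Fintype.sum_prod_type]
        _ = ∑ q : I × J, πstar q.1 q.2 * f q :=
            Finset.sum_congr rfl fun q _ => by rw [← Finset.sum_mul, hσ.2.1 q]
        _ = ∑ i, ∑ j, πstar i j * f (i, j) := by rw [Fintype.sum_prod_type]
    have hcol : ∀ f : I × J → ℝ, ∑ k, w k * f k.2 = ∑ i, ∑ j, πstar i j * f (i, j) := by
      intro f
      calc ∑ k, w k * f k.2 = ∑ q : I × J, ∑ q' : I × J, σ q q' * f q' := by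
            rw [Fintype.sum_prod_type]
        _ = ∑ q' : I × J, ∑ q : I × J, σ q q' * f q' := Finset.sum_comm
        _ = ∑ q' : I × J, πstar q'.1 q'.2 * f q' :=
            Finset.sum_congr rfl fun q' _ => by rw [← Finset.sum_mul, hσ.2.2 q']
        _ = ∑ i, ∑ j, πstar i j * f (i, j) := by rw [Fintype.sum_prod_type]
    -- pointwise triangle inequality
    set A : ((I × J) × (I × J)) → ℝ := fun k => s * dist (ν0 k.1.1) (ν1 k.1.2) with hAdef
    set B : ((I × J) × (I × J)) → ℝ :=
      fun k => dist (γ k.1.1 k.1.2 s) (γ k.2.1 k.2.2 t) with hBdef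
    set C : ((I × J) × (I × J)) → ℝ := fun k => (1 - t) * dist (ν0 k.2.1) (ν1 k.2.2) with hCdef
    have hpt : ∀ k, dist (ν0 k.1.1) (ν1 k.2.2) ≤ A k + B k + C k := by
      rintro ⟨⟨i, j⟩, ⟨i', j'⟩⟩
      have t1 : dist (ν0 i) (γ i j s) = s * dist (ν0 i) (ν1 j) := by
        have := hspeed i j 0 s le_rfl hs hs1
        rwa [hγ0, sub_zero] at this
      have t2 : dist (γ i' j' t) (ν1 j') = (1 - t) * dist (ν0 i') (ν1 j') := by
        have := hspeed i' j' t 1 ht0 ht1 le_rfl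
        rwa [hγ1] at this
      calc dist (ν0 i) (ν1 j') ≤ dist (ν0 i) (γ i j s) + dist (γ i j s) (ν1 j') :=
            dist_triangle _ _ _
        _ ≤ dist (ν0 i) (γ i j s) + (dist (γ i j s) (γ i' j' t) + dist (γ i' j' t) (ν1 j')) :=
            add_le_add_right (dist_triangle _ _ _) _
        _ = A ((i, j), (i', j')) + B ((i, j), (i', j')) + C ((i, j), (i', j')) := by
            rw [t1, t2]; ring
    -- the chain of inequalities
    have hAval : ∑ k, w k * (A k) ^ 2 = s ^ 2 * D ^ 2 := by
      calc ∑ k, w k * (A k) ^ 2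
          = ∑ i, ∑ j, πstar i j * (s * dist (ν0 i) (ν1 j)) ^ 2 :=
            hrow (fun q => (s * dist (ν0 q.1) (ν1 q.2)) ^ 2)
        _ = s ^ 2 * ∑ i, ∑ j, πstar i j * dist (ν0 i) (ν1 j) ^ 2 := by
            rw [Finset.mul_sum]
            refine Finset.sum_congr rfl fun i _ => ?_
            rw [Finset.mul_sum]
            exact Finset.sum_congr rfl fun j _ => by ring
        _ = s ^ 2 * D ^ 2 := by rw [← hopt]
    have hCval : ∑ k, w k * (C k) ^ 2 = (1 - t) ^ 2 * D ^ 2 := by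
      calc ∑ k, w k * (C k) ^ 2
          = ∑ i, ∑ j, πstar i j * ((1 - t) * dist (ν0 i) (ν1 j)) ^ 2 :=
            hcol (fun q => ((1 - t) * dist (ν0 q.1) (ν1 q.2)) ^ 2)
        _ = (1 - t) ^ 2 * ∑ i, ∑ j, πstar i j * dist (ν0 i) (ν1 j) ^ 2 := by
            rw [Finset.mul_sum]
            refine Finset.sum_congr rfl fun i _ => ?_
            rw [Finset.mul_sum]
            exact Finset.sum_congr rfl fun j _ => by ring
        _ = (1 - t) ^ 2 * D ^ 2 := by rw [← hopt]
    have hBval : ∑ k, w k * (B k) ^ 2 = c := by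
      rw [hcdef, Fintype.sum_prod_type]
    have hDle : D ≤ Real.sqrt (∑ i, ∑ j', τ i j' * dist (ν0 i) (ν1 j') ^ 2) :=
      discDist_le_sqrt p0 ν0 p1 ν1 τ hτ
    have step1 : Real.sqrt (∑ k, w k * dist (ν0 k.1.1) (ν1 k.2.2) ^ 2) ≤
        Real.sqrt (∑ k, w k * (A k + B k + C k) ^ 2) := by
      apply Real.sqrt_le_sqrt
      refine Finset.sum_le_sum fun k _ => ?_
      refine mul_le_mul_of_nonneg_left ?_ (hw k)
      exact pow_le_pow_left₀ dist_nonneg (hpt k) 2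
    have step2 : Real.sqrt (∑ k, w k * (A k + B k + C k) ^ 2) ≤
        Real.sqrt (∑ k, w k * (A k + B k) ^ 2) + Real.sqrt (∑ k, w k * (C k) ^ 2) :=
      weighted_l2_triangle w (fun k => A k + B k) C hw
    have step3 : Real.sqrt (∑ k, w k * (A k + B k) ^ 2) ≤
        Real.sqrt (∑ k, w k * (A k) ^ 2) + Real.sqrt (∑ k, w k * (B k) ^ 2) :=
      weighted_l2_triangle w A B hw
    have hsA : Real.sqrt (∑ k, w k * (A k) ^ 2) = s * D := by
      rw [hAval, show s ^ 2 * D ^ 2 = (s * D) ^ 2 by ring,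
        Real.sqrt_sq (mul_nonneg hs hD0)]
    have hsC : Real.sqrt (∑ k, w k * (C k) ^ 2) = (1 - t) * D := by
      rw [hCval, show (1 - t) ^ 2 * D ^ 2 = ((1 - t) * D) ^ 2 by ring,
        Real.sqrt_sq (mul_nonneg h1t hD0)]
    have hkey : D ≤ s * D + Real.sqrt c + (1 - t) * D := by
      calc D ≤ Real.sqrt (∑ i, ∑ j', τ i j' * dist (ν0 i) (ν1 j') ^ 2) := hDle
        _ = Real.sqrt (∑ k, w k * dist (ν0 k.1.1) (ν1 k.2.2) ^ 2) := by rw [hT]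
        _ ≤ Real.sqrt (∑ k, w k * (A k + B k + C k) ^ 2) := step1
        _ ≤ Real.sqrt (∑ k, w k * (A k + B k) ^ 2) + Real.sqrt (∑ k, w k * (C k) ^ 2) := step2
        _ ≤ (Real.sqrt (∑ k, w k * (A k) ^ 2) + Real.sqrt (∑ k, w k * (B k) ^ 2)) +
              Real.sqrt (∑ k, w k * (C k) ^ 2) := add_le_add_left step3 _
        _ = s * D + Real.sqrt c + (1 - t) * D := by rw [hsA, hsC, hBval]
    have hfin : (t - s) * D ≤ Real.sqrt c := by nlinarith [hkey]
    calc ((t - s) * D) ^ 2 ≤ Real.sqrt c ^ 2 :=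
          pow_le_pow_left₀ (mul_nonneg hts hD0) hfin 2
      _ = c := Real.sq_sqrt hc0
  -- the diagonal coupling achieves the value ((t-s)*D)^2
  have mem : ((t - s) * D) ^ 2 ∈ {c : ℝ | ∃ π : (I × J) → (I × J) → ℝ,
      IsCoupling (fun q : I × J => πstar q.1 q.2) (fun q : I × J => πstar q.1 q.2) π ∧
      c = ∑ q, ∑ q', π q q' * dist (γ q.1 q.2 s) (γ q'.1 q'.2 t) ^ 2} := by
    refine ⟨fun q q' => if q' = q then πstar q.1 q.2 else 0, ⟨?_, ?_, ?_⟩, ?_⟩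
    · intro q q'
      dsimp only
      split
      · exact hπ.1 q.1 q.2
      · exact le_refl 0
    · intro q; simp
    · intro q'; simp
    · have : ∀ q : I × J, ∑ q', (if q' = q then πstar q.1 q.2 else 0) *
          dist (γ q.1 q.2 s) (γ q'.1 q'.2 t) ^ 2 =
          πstar q.1 q.2 * ((t - s) * dist (ν0 q.1) (ν1 q.2)) ^ 2 := by
        intro q
        rw [Finset.sum_eq_single q]
        · rw [if_pos rfl, hspeed q.1 q.2 s t hs hst ht1]
        · intro q' _ hne; rw [if_neg hne, zero_mul]
        · intro h; exact absurd (Finset.mem_univ q) h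
      rw [show (t - s) * D = D * (t - s) by ring, mul_pow, hopt]
      rw [Finset.sum_congr rfl fun q _ => this q, Fintype.sum_prod_type]
      rw [Finset.sum_mul]
      refine Finset.sum_congr rfl fun i _ => ?_
      rw [Finset.sum_mul]
      exact Finset.sum_congr rfl fun j _ => by ring
  -- conclude
  unfold discDist
  have hinf : sInf {c : ℝ | ∃ π : (I × J) → (I × J) → ℝ,
      IsCoupling (fun q : I × J => πstar q.1 q.2) (fun q : I × J => πstar q.1 q.2) π ∧
      c = ∑ q, ∑ q', π q q' * dist (γ q.1 q.2 s) (γ q'.1 q'.2 t) ^ 2} = ((t - s) * D) ^ 2 :=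
    le_antisymm (csInf_le ⟨_, lower⟩ mem) (le_csInf ⟨_, mem⟩ lower)
  rw [hinf, Real.sqrt_sq (mul_nonneg hts hD0)]
end

section
/- Upper bound along interpolating curves: let μ0 = (p0, ν0) and μ1 = (p1, ν1) be discrete measures on a metric space (X, dist), and let π be any coupling of p0 and p1. Suppose for each pair (i,j) there is a curve γ_{ij} : [0,1] → X with dist(γ_{ij}(s), γ_{ij}(t)) = (t−s)·dist(ν0 i, ν1 j) for 0 ≤ s ≤ t ≤ 1. Let μ_t be the discrete measure indexed by pairs (i,j) with weights π(i,j) and support points γ_{ij}(t). Then for all 0 ≤ s ≤ t ≤ 1, d(μ_s, μ_t) ≤ (t−s)·√(Σ_{i,j} π(i,j)·dist(ν0 i, ν1 j)²). -/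
open Finset

/-- Upper bound along interpolating curves: for any coupling `π` and constant-speed
interpolating curves, the distance between the interpolated discrete measures at times
`s ≤ t` is at most `(t - s)` times the square root of the transport cost of `π`. -/
theorem discDist_interp_le {X : Type*} [MetricSpace X] {I J : Type*} [Fintype I] [Fintype J]
    (p0 : I → ℝ) (ν0 : I → X) (p1 : J → ℝ) (ν1 : J → X)
    (h0 : IsProbVec p0) (h1 : IsProbVec p1)
    (π : I → J → ℝ) (hπ : IsCoupling p0 p1 π)
    (γ : I → J → ℝ → X)
    (hspeed : ∀ i j, ∀ s t : ℝ, 0 ≤ s → s ≤ t → t ≤ 1 →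
      dist (γ i j s) (γ i j t) = (t - s) * dist (ν0 i) (ν1 j)) :
    ∀ s t : ℝ, 0 ≤ s → s ≤ t → t ≤ 1 →
      discDist (fun q : I × J => π q.1 q.2) (fun q : I × J => γ q.1 q.2 s)
        (fun q : I × J => π q.1 q.2) (fun q : I × J => γ q.1 q.2 t) ≤
      (t - s) * Real.sqrt (∑ i, ∑ j, π i j * dist (ν0 i) (ν1 j) ^ 2) := by
  intro s t hs hst ht1
  classical
  set C := ∑ i, ∑ j, π i j * dist (ν0 i) (ν1 j) ^ 2 with hC
  have hCnn : 0 ≤ C := by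
    apply Finset.sum_nonneg; intro i _
    apply Finset.sum_nonneg; intro j _
    exact mul_nonneg (hπ.1 i j) (sq_nonneg _)
  -- the diagonal coupling
  set δ : (I × J) → (I × J) → ℝ := fun q q' => if q' = q then π q.1 q.2 else 0 with hδ
  have hδc : IsCoupling (fun q : I × J => π q.1 q.2) (fun q : I × J => π q.1 q.2) δ := by
    refine ⟨fun q q' => ?_, fun q => ?_, fun q => ?_⟩
    · dsimp [δ]; split <;> [exact hπ.1 q.1 q.2; exact le_rfl]
    · simp [δ]
    · simp [δ]
  have hcost : (∑ q : I × J, ∑ q' : I × J, δ q q' * dist (γ q.1 q.2 s) (γ q'.1 q'.2 t) ^ 2)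
      = (t - s) ^ 2 * C := by
    have : ∀ q : I × J, (∑ q' : I × J, δ q q' * dist (γ q.1 q.2 s) (γ q'.1 q'.2 t) ^ 2)
        = π q.1 q.2 * ((t - s) * dist (ν0 q.1) (ν1 q.2)) ^ 2 := by
      intro q
      rw [Finset.sum_eq_single q]
      · simp [δ, hspeed q.1 q.2 s t hs hst ht1]
      · intro q' _ hne; simp [δ, hne]
      · simp
    rw [Finset.sum_congr rfl (fun q _ => this q)]
    rw [hC, Fintype.sum_prod_type, Finset.mul_sum]
    refine Finset.sum_congr rfl fun i _ => ?_
    rw [Finset.mul_sum]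
    refine Finset.sum_congr rfl fun j _ => ?_
    ring
  have hmem : (t - s) ^ 2 * C ∈ {c : ℝ | ∃ π' : (I × J) → (I × J) → ℝ,
      IsCoupling (fun q : I × J => π q.1 q.2) (fun q : I × J => π q.1 q.2) π' ∧
      c = ∑ q : I × J, ∑ q' : I × J, π' q q' * dist (γ q.1 q.2 s) (γ q'.1 q'.2 t) ^ 2} :=
    ⟨δ, hδc, hcost.symm⟩
  have hbdd : BddBelow {c : ℝ | ∃ π' : (I × J) → (I × J) → ℝ,
      IsCoupling (fun q : I × J => π q.1 q.2) (fun q : I × J => π q.1 q.2) π' ∧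
      c = ∑ q : I × J, ∑ q' : I × J, π' q q' * dist (γ q.1 q.2 s) (γ q'.1 q'.2 t) ^ 2} := by
    refine ⟨0, fun c hc => ?_⟩
    obtain ⟨π', hπ', rfl⟩ := hc
    apply Finset.sum_nonneg; intro q _
    apply Finset.sum_nonneg; intro q' _
    exact mul_nonneg (hπ'.1 q q') (sq_nonneg _)
  have hle := csInf_le hbdd hmem
  calc discDist (fun q : I × J => π q.1 q.2) (fun q : I × J => γ q.1 q.2 s)
        (fun q : I × J => π q.1 q.2) (fun q : I × J => γ q.1 q.2 t)
      ≤ Real.sqrt ((t - s) ^ 2 * C) := Real.sqrt_le_sqrt hle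
    _ = (t - s) * Real.sqrt C := by
        rw [Real.sqrt_mul (sq_nonneg _), Real.sqrt_sq (by linarith)]
end

section
/- Closed-form minimum of the Gaussian transport objective: let m0, m1 ∈ ℝⁿ and let Σ0, Σ1 be n×n real positive semidefinite matrices with Σ0 positive definite. Then the minimum over all n×n real matrices S with [[Σ0, S], [Sᵀ, Σ1]] positive semidefinite of ‖m0 − m1‖² + trace(Σ0 + Σ1 − 2S) is attained and equals ‖m0 − m1‖² + trace(Σ0) + trace(Σ1) − 2·trace((Σ0^{1/2} Σ1 Σ0^{1/2})^{1/2}). -/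
open Matrix

/-- The unique positive semidefinite square root of a positive semidefinite matrix
(junk value `0` if the matrix is not positive semidefinite). -/
noncomputable def psdSqrt {n : ℕ} (A : Matrix (Fin n) (Fin n) ℝ) : Matrix (Fin n) (Fin n) ℝ :=
  open Classical in
  if hA : A.PosSemidef then
    (hA.1.eigenvectorUnitary : Matrix (Fin n) (Fin n) ℝ) *
      diagonal ((↑) ∘ (√·) ∘ hA.1.eigenvalues) *
      (star hA.1.eigenvectorUnitary : Matrix (Fin n) (Fin n) ℝ)
  else 0

noncomputable def Matrix.PosSemidef.sqrt {n : ℕ} {A : Matrix (Fin n) (Fin n) ℝ} (hA : A.PosSemidef) :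
    Matrix (Fin n) (Fin n) ℝ :=
  (hA.1.eigenvectorUnitary : Matrix (Fin n) (Fin n) ℝ) *
      diagonal ((↑) ∘ (√·) ∘ hA.1.eigenvalues) *
      (star hA.1.eigenvectorUnitary : Matrix (Fin n) (Fin n) ℝ)

lemma Matrix.PosSemidef.posSemidef_sqrt {n : ℕ} {A : Matrix (Fin n) (Fin n) ℝ}
    (hA : A.PosSemidef) : hA.sqrt.PosSemidef := by
  unfold Matrix.PosSemidef.sqrt
  have hD : (diagonal ((↑) ∘ (√·) ∘ hA.1.eigenvalues) : Matrix (Fin n) (Fin n) ℝ).PosSemidef :=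
    PosSemidef.diagonal fun i => by simp [Real.sqrt_nonneg]
  have := hD.mul_mul_conjTranspose_same (hA.1.eigenvectorUnitary : Matrix (Fin n) (Fin n) ℝ)
  simpa [Matrix.star_eq_conjTranspose] using this

lemma Matrix.PosSemidef.sqrt_mul_self {n : ℕ} {A : Matrix (Fin n) (Fin n) ℝ}
    (hA : A.PosSemidef) : hA.sqrt * hA.sqrt = A := by
  unfold Matrix.PosSemidef.sqrt
  set U : Matrix (Fin n) (Fin n) ℝ := (hA.1.eigenvectorUnitary : Matrix (Fin n) (Fin n) ℝ)
  have hU : (star hA.1.eigenvectorUnitary : Matrix (Fin n) (Fin n) ℝ) * U = 1 :=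
    Unitary.star_mul_self_of_mem hA.1.eigenvectorUnitary.2
  conv_rhs => rw [hA.1.spectral_theorem, Unitary.conjStarAlgAut_apply]
  calc _ = U * (diagonal ((↑) ∘ (√·) ∘ hA.1.eigenvalues) *
      ((star hA.1.eigenvectorUnitary : Matrix (Fin n) (Fin n) ℝ) * U) *
      diagonal ((↑) ∘ (√·) ∘ hA.1.eigenvalues)) *
      (star hA.1.eigenvectorUnitary : Matrix (Fin n) (Fin n) ℝ) := by
        simp only [Matrix.mul_assoc]; rfl
    _ = _ := by
        rw [hU, Matrix.mul_one, diagonal_mul_diagonal]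
        congr 3
        funext i
        simp [Real.mul_self_sqrt (hA.eigenvalues_nonneg i)]

namespace GaussianAux

variable {n : ℕ}

lemma trace_nonneg {A : Matrix (Fin n) (Fin n) ℝ} (hA : A.PosSemidef) : 0 ≤ A.trace := by
  rw [Matrix.trace]
  refine Finset.sum_nonneg fun i _ => ?_
  have := hA.dotProduct_mulVec_nonneg (Pi.single i 1)
  simpa [dotProduct, Matrix.mulVec, Pi.single_apply, Finset.sum_ite_eq] using this

lemma trace_mul_nonneg {A B : Matrix (Fin n) (Fin n) ℝ} (hA : A.PosSemidef)
    (hB : B.PosSemidef) : 0 ≤ (A * B).trace := by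
  have h2 : hA.sqrtᴴ = hA.sqrt := hA.posSemidef_sqrt.1
  have h1 : (hA.sqrt * B * hA.sqrt).PosSemidef := by
    have := hB.mul_mul_conjTranspose_same hA.sqrt
    rwa [h2] at this
  have h3 : (A * B).trace = (hA.sqrt * B * hA.sqrt).trace := by
    rw [show A * B = hA.sqrt * (hA.sqrt * B) by rw [← Matrix.mul_assoc, hA.sqrt_mul_self],
      Matrix.trace_mul_comm]
  rw [h3]
  exact trace_nonneg h1

lemma trace_le_sqrt_trace {N G : Matrix (Fin n) (Fin n) ℝ} (hG : G.PosSemidef)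
    (hd : (G - Nᴴ * N).PosSemidef) : N.trace ≤ hG.sqrt.trace := by
  set M := hG.sqrt with hMdef
  have hM : M.PosSemidef := hG.posSemidef_sqrt
  have hMM : M * M = G := hG.sqrt_mul_self
  have key : ∀ ε : ℝ, 0 < ε → 2 * N.trace ≤ 2 * M.trace + ε * n := by
    intro ε hε
    set P : Matrix (Fin n) (Fin n) ℝ := M + ε • 1 with hPdef
    have hP : P.PosDef := Matrix.PosDef.posSemidef_add hM (by
      rw [smul_one_eq_diagonal]; exact .diagonal fun _ => hε)
    haveI : Invertible P := hP.isUnit.invertible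
    have hPH : Pᴴ = P := hP.isHermitian
    have hPinv : P⁻¹.PosSemidef := hP.inv.posSemidef
    have ha : 0 ≤ ((N - P) * P⁻¹ * (N - P)ᴴ).trace :=
      trace_nonneg (hPinv.mul_mul_conjTranspose_same (N - P))
    have hexp : (N - P) * P⁻¹ * (N - P)ᴴ = N * P⁻¹ * Nᴴ - N - Nᴴ + P := by
      rw [conjTranspose_sub, hPH]
      simp only [Matrix.sub_mul, Matrix.mul_sub, Matrix.mul_inv_of_invertible,
        Matrix.inv_mul_cancel_right_of_invertible, Matrix.one_mul]
      abel
    have htrNH : Nᴴ.trace = N.trace := by simp [Matrix.trace_conjTranspose]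
    have ha' : 2 * N.trace ≤ (N * P⁻¹ * Nᴴ).trace + P.trace := by
      rw [hexp] at ha
      simp only [Matrix.trace_add, Matrix.trace_sub, htrNH] at ha
      linarith
    have hb : (N * P⁻¹ * Nᴴ).trace ≤ (G * P⁻¹).trace := by
      have h0 : 0 ≤ ((G - Nᴴ * N) * P⁻¹).trace := trace_mul_nonneg hd hPinv
      have h1 : (N * P⁻¹ * Nᴴ).trace = (Nᴴ * N * P⁻¹).trace := by
        rw [Matrix.trace_mul_comm, ← Matrix.mul_assoc]
      rw [Matrix.sub_mul, Matrix.trace_sub] at h0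
      linarith [h0, h1.le, h1.ge]
    have hc : (G * P⁻¹).trace ≤ M.trace := by
      have hGP : G * P⁻¹ = M - ε • (M * P⁻¹) := by
        have : G = M * P - ε • M := by
          rw [hPdef, Matrix.mul_add, ← hMM, Matrix.mul_smul, Matrix.mul_one]
          abel
        rw [this, Matrix.sub_mul, Matrix.mul_inv_cancel_right_of_invertible,
          Matrix.smul_mul]
      have hMP : 0 ≤ (M * P⁻¹).trace := trace_mul_nonneg hM hPinv
      rw [hGP, Matrix.trace_sub, Matrix.trace_smul]
      have : 0 ≤ ε * (M * P⁻¹).trace := mul_nonneg hε.le hMP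
      simp only [smul_eq_mul]
      linarith
    have hdtr : P.trace = M.trace + ε * n := by
      rw [hPdef, Matrix.trace_add, Matrix.trace_smul, Matrix.trace_one]
      simp [smul_eq_mul]
    linarith
  refine le_of_forall_pos_le_add fun η hη => ?_
  have hkey := key (η / (n + 1)) (by positivity)
  have h1 : (η / (↑n + 1)) * n ≤ η := by
    rw [div_mul_eq_mul_div, div_le_iff₀ (by positivity)]
    nlinarith [Nat.cast_nonneg (α := ℝ) n]
  linarith

end GaussianAux

/-- Closed-form minimum of the Gaussian transport objective: the minimum of
`‖m₀ − m₁‖² + trace(Σ₀ + Σ₁ − 2S)` over all `S` with `[[Σ₀, S], [Sᵀ, Σ₁]]` positive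
semidefinite is attained and equals
`‖m₀ − m₁‖² + trace Σ₀ + trace Σ₁ − 2 trace((Σ₀^{1/2} Σ₁ Σ₀^{1/2})^{1/2})`. -/
theorem gaussian_transport_min {n : ℕ} (m0 m1 : EuclideanSpace ℝ (Fin n))
    (Sig0 Sig1 : Matrix (Fin n) (Fin n) ℝ)
    (h0 : Sig0.PosDef) (h1 : Sig1.PosSemidef) :
    IsLeast
      {v : ℝ | ∃ S : Matrix (Fin n) (Fin n) ℝ,
        (Matrix.fromBlocks Sig0 S Sᵀ Sig1).PosSemidef ∧
        v = ‖m0 - m1‖ ^ 2 + (Sig0 + Sig1 - 2 • S).trace}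
      (‖m0 - m1‖ ^ 2 + Sig0.trace + Sig1.trace -
        2 * (psdSqrt (psdSqrt Sig0 * Sig1 * psdSqrt Sig0)).trace) := by
  have hA0 : Sig0.PosSemidef := h0.posSemidef
  set A := hA0.sqrt with hAdef
  have hA : A.PosSemidef := hA0.posSemidef_sqrt
  have hAH : Aᴴ = A := hA.1
  have hAA : A * A = Sig0 := hA0.sqrt_mul_self
  have hAunit : IsUnit A.det := by
    have hdet : A.det * A.det = Sig0.det := by rw [← Matrix.det_mul, hAA]
    have hpos := h0.det_pos
    refine isUnit_iff_ne_zero.mpr fun h => ?_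
    rw [h, mul_zero] at hdet
    linarith [hdet ▸ hpos]
  haveI : Invertible A := A.invertibleOfIsUnitDet hAunit
  haveI : Invertible Sig0 := h0.isUnit.invertible
  have hSig0inv : Sig0⁻¹ = A⁻¹ * A⁻¹ := by rw [← hAA, Matrix.mul_inv_rev]
  have hAinvH : A⁻¹ᴴ = A⁻¹ := by rw [Matrix.conjTranspose_nonsing_inv, hAH]
  have hG : (A * Sig1 * A).PosSemidef := by
    have := h1.mul_mul_conjTranspose_same A
    rwa [hAH] at this
  set M := hG.sqrt with hMdef
  have hMps : M.PosSemidef := hG.posSemidef_sqrt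
  have hMH : Mᴴ = M := hMps.1
  have hMM : M * M = A * Sig1 * A := hG.sqrt_mul_self
  have hps1 : psdSqrt Sig0 = A := by unfold psdSqrt; rw [dif_pos hA0]; rfl
  have hps2 : psdSqrt (psdSqrt Sig0 * Sig1 * psdSqrt Sig0) = M := by
    rw [hps1]; unfold psdSqrt; rw [dif_pos hG]; rfl
  clear_value A
  have hkey0 : ∀ N : Matrix (Fin n) (Fin n) ℝ, ((A * Sig1 * A) - Nᴴ * N).PosSemidef →
      N.trace ≤ M.trace := fun N h => GaussianAux.trace_le_sqrt_trace hG h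
  clear_value M
  rw [hps2]
  constructor
  · refine ⟨A * M * A⁻¹, ?_, ?_⟩
    · have hSHc : (A * M * A⁻¹)ᴴ = A⁻¹ * M * A := by
        simp only [Matrix.conjTranspose_mul, hAinvH, hMH, hAH, Matrix.mul_assoc]
      have hST : (A * M * A⁻¹)ᵀ = (A * M * A⁻¹)ᴴ :=
        (Matrix.conjTranspose_eq_transpose_of_trivial _).symm
      rw [hST, Matrix.PosDef.fromBlocks₁₁ _ _ h0]
      have hz : Sig1 - (A * M * A⁻¹)ᴴ * Sig0⁻¹ * (A * M * A⁻¹) = 0 := by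
        rw [hSHc, hSig0inv]
        have : A⁻¹ * M * A * (A⁻¹ * A⁻¹) * (A * M * A⁻¹) = Sig1 :=
          calc A⁻¹ * M * A * (A⁻¹ * A⁻¹) * (A * M * A⁻¹)
              = A⁻¹ * (M * M) * A⁻¹ := by
                simp only [Matrix.mul_assoc, Matrix.inv_mul_cancel_left_of_invertible,
                  Matrix.mul_inv_cancel_left_of_invertible]
            _ = A⁻¹ * (A * Sig1 * A) * A⁻¹ := by rw [hMM]
            _ = Sig1 := by
                simp only [Matrix.mul_assoc, Matrix.mul_inv_of_invertible, Matrix.mul_one,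
                  Matrix.inv_mul_cancel_left_of_invertible]
        rw [this, sub_self]
      rw [hz]
      exact Matrix.PosSemidef.zero
    · have htr : (A * M * A⁻¹).trace = M.trace := by
        rw [Matrix.trace_mul_comm, Matrix.inv_mul_cancel_left_of_invertible]
      rw [Matrix.trace_sub, Matrix.trace_add, Matrix.trace_smul, htr]
      simp only [nsmul_eq_mul, Nat.cast_ofNat]
      ring
  · rintro v ⟨S, hS, rfl⟩
    have hST : Sᵀ = Sᴴ := (Matrix.conjTranspose_eq_transpose_of_trivial S).symm
    rw [hST, Matrix.PosDef.fromBlocks₁₁ _ _ h0] at hS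
    set N := A⁻¹ * S * A with hNdef
    have hNH : Nᴴ = A * Sᴴ * A⁻¹ := by
      simp only [hNdef, Matrix.conjTranspose_mul, hAinvH, hAH, Matrix.mul_assoc]
    have hdiff : ((A * Sig1 * A) - Nᴴ * N).PosSemidef := by
      have h' := hS.mul_mul_conjTranspose_same A
      rw [hAH] at h'
      have heq : A * (Sig1 - Sᴴ * Sig0⁻¹ * S) * A = (A * Sig1 * A) - Nᴴ * N := by
        have hNN : Nᴴ * N = A * (Sᴴ * Sig0⁻¹ * S) * A := by
          rw [hNH, hNdef, hSig0inv]
          simp only [Matrix.mul_assoc, Matrix.inv_mul_cancel_left_of_invertible,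
            Matrix.mul_inv_cancel_left_of_invertible]
        rw [Matrix.mul_sub, Matrix.sub_mul, hNN]
      rwa [heq] at h'
    have hkey : N.trace ≤ M.trace := hkey0 N hdiff
    have htrN : N.trace = S.trace := by
      rw [hNdef, Matrix.trace_mul_comm, Matrix.mul_inv_cancel_left_of_invertible]
    rw [Matrix.trace_sub, Matrix.trace_add, Matrix.trace_smul]
    simp only [nsmul_eq_mul, Nat.cast_ofNat]
    linarith [hkey, htrN.ge, htrN.le]
end
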